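/- Let q be a prime power, n a positive integer, and let S, T be subsets of F_q^n of the same cardinality N, enumerated as s_1, …, s_N and t_1, …, t_N, such that the equation s_i + t_i = s_j + t_k holds only when (j, k) = (i, i). Then N ≤ M(F_q^n). -/

import Mathlib

open Pointwise

/-- `mCount q n d` is the number of monomials in `x₁, …, xₙ` with degree at most `q - 1`
in each variable and total degree at most `d`. -/
noncomputable def mCount (q n : ℕ) (d : ℝ) : ℕ :=
  Nat.card {a : Fin n → ℕ // (∀ i, a i ≤ q - 1) ∧ ((∑ i, a i : ℕ) : ℝ) ≤ d}

/-- `Mbound q n = 3 ⬝ m_{(q-1)n/3}`, the Ellenberg–Gijswijt bound for `𝔽_q^n`. -/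
noncomputable def Mbound (q n : ℕ) : ℕ := 3 * mCount q n (((q : ℝ) - 1) * n / 3)

/-!
On `𝔽_q^n` the polynomial `P(x, y, z) = ∏ₗ (1 - (xₗ + yₗ + zₗ) ^ (q - 1))` is the indicator of
`x + y + z = 0`, so at `(s i, t j, -(s k + t k))` it is the diagonal tensor `[i = k ∧ j = k]`.
Every monomial of `P` has degree at most `q - 1` in each variable and total degree at most
`(q - 1) n`, hence degree at most `(q - 1) n / 3` in one of `x`, `y`, `z`. Grouping the monomials
accordingly writes `P` as a sum of `3 m` slices (products of a function of one variable and a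
function of the other two). A diagonal tensor with nonzero diagonal is not a sum of fewer than `N`
slices: contracting against a vector orthogonal to the first kind of slices, with large support,
leaves a diagonal matrix of large rank written as a sum of few rank-one matrices.
-/

open Finset Module Matrix MvPolynomial

section SliceRank

variable {K ι : Type*} [Field K] [Fintype ι]

theorem Submodule.exists_ne_zero_forall_eq_zero_of_card_lt (V : Submodule K (ι → K))
    (S : Finset ι) (hS : #S < finrank K V) : ∃ w ∈ V, w ≠ 0 ∧ ∀ i ∈ S, w i = 0 := by
  let restrict : V →ₗ[K] (S → K) := (LinearMap.funLeft K K Subtype.val).comp V.subtype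
  have hker : LinearMap.ker restrict ≠ ⊥ :=
    LinearMap.ker_ne_bot_of_finrank_lt (by rwa [finrank_fintype_fun_eq_card, Fintype.card_coe])
  obtain ⟨w, hw, hw0⟩ := (Submodule.ne_bot_iff _).1 hker
  exact ⟨w, w.2, fun h => hw0 (Subtype.ext h), fun i hi => congrFun hw ⟨i, hi⟩⟩

theorem Submodule.exists_mem_finrank_le_card_support [DecidableEq K] (V : Submodule K (ι → K)) :
    ∃ c ∈ V, finrank K V ≤ #{i | c i ≠ 0} := by
  classical
  suffices ∀ m ≤ finrank K V, ∃ c ∈ V, m ≤ #{i | c i ≠ 0} from this _ le_rfl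
  intro m hm
  induction m with
  | zero => exact ⟨0, V.zero_mem, Nat.zero_le _⟩
  | succ m ih =>
    obtain ⟨c, hcV, hc⟩ := ih (by omega)
    obtain hlt | hle := lt_or_ge m #{i | c i ≠ 0}
    · exact ⟨c, hcV, hlt⟩
    obtain ⟨w, hwV, hw0, hw⟩ :=
      V.exists_ne_zero_forall_eq_zero_of_card_lt {i | c i ≠ 0} (by omega)
    obtain ⟨i₀, hi₀⟩ := Function.ne_iff.1 hw0
    have hc₀ : c i₀ = 0 := by_contra fun h => hi₀ (hw i₀ (by simpa using h))
    have hsupp : insert i₀ ({i | c i ≠ 0} : Finset ι) ⊆ ({i | (c + w) i ≠ 0} : Finset ι) := by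
      intro i hi
      obtain rfl | hi := mem_insert.1 hi
      · simpa [hc₀] using hi₀
      · simp_all
    refine ⟨c + w, V.add_mem hcV hwV, ?_⟩
    have := card_le_card hsupp
    rw [card_insert_of_notMem (by simpa using hc₀)] at this
    omega

theorem card_support_le_of_diagonal_eq_mul [DecidableEq ι] [DecidableEq K] {κ : Type*} [Fintype κ]
    {c : ι → K} {U : Matrix ι κ K} {W : Matrix κ ι K} (h : diagonal c = U * W) :
    #{i | c i ≠ 0} ≤ Fintype.card κ := by
  rw [← Fintype.card_subtype, ← rank_diagonal, h]
  exact (rank_mul_le_left U W).trans (rank_le_card_width U)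

theorem card_le_of_eq_sum_slices [DecidableEq ι] {α β γ : Type*} [Fintype α] [Fintype β] [Fintype γ]
    (f : α → ι → K) (g : α → ι → ι → K) (f' : β → ι → K) (g' : β → ι → ι → K)
    (f'' : γ → ι → K) (g'' : γ → ι → ι → K)
    (h : ∀ i j k, (if i = k ∧ j = k then 1 else 0 : K) =
      ∑ a, f a i * g a j k + ∑ b, f' b j * g' b i k + ∑ c, f'' c k * g'' c i j) :
    Fintype.card ι ≤ Fintype.card α + Fintype.card β + Fintype.card γ := by
  classical
  have hV : Fintype.card ι ≤ Fintype.card α + finrank K (LinearMap.ker (mulVecLin (of f))) := by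
    have := (mulVecLin (of f)).finrank_range_add_finrank_ker
    have := (LinearMap.range (mulVecLin (of f))).finrank_le
    simp only [finrank_fintype_fun_eq_card] at *
    omega
  obtain ⟨c, hcV, hc⟩ := (LinearMap.ker (mulVecLin (of f))).exists_mem_finrank_le_card_support
  have hcf : ∀ a, ∑ i, c i * f a i = 0 := fun a => by
    simpa [mulVec, dotProduct, mul_comm] using congrFun (LinearMap.mem_ker.1 hcV) a
  have hdiag : diagonal c = of (fun j => Sum.elim (f' · j) (fun e => ∑ i, c i * g'' e i j)) *
      of (Sum.elim (fun b k => ∑ i, c i * g' b i k) f'') := by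
    ext j k
    calc diagonal c j k = ∑ i, c i * (if i = k ∧ j = k then 1 else 0) := by
          by_cases hjk : j = k <;> simp [hjk]
      _ = ∑ a, (∑ i, c i * f a i) * g a j k + ∑ b, f' b j * ∑ i, c i * g' b i k +
            ∑ e, (∑ i, c i * g'' e i j) * f'' e k := by
          simp only [h, mul_add, sum_add_distrib, mul_sum, sum_mul]
          rw [sum_comm, sum_comm (γ := β), sum_comm (γ := γ)]
          congr 1; congr 1
          all_goals exact sum_congr rfl fun _ _ => sum_congr rfl fun _ _ => by ring
      _ = _ := by simp [hcf, mul_apply]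
  have := card_support_le_of_diagonal_eq_mul hdiag
  rw [Fintype.card_sum] at this
  omega

end SliceRank

theorem FiniteField.one_sub_pow_card_sub_one {F : Type*} [Field F] [Fintype F] [DecidableEq F]
    (a : F) : 1 - a ^ (Fintype.card F - 1) = if a = 0 then 1 else 0 := by
  split_ifs with ha
  · rw [ha, zero_pow (by have := Fintype.one_lt_card (α := F); omega), sub_zero]
  · rw [FiniteField.pow_card_sub_one_eq_one a ha, sub_self]

theorem FiniteField.prod_one_sub_pow_card_sub_one {F ι : Type*} [Field F] [Fintype F]
    [DecidableEq F] [Fintype ι] (v : ι → F) :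
    ∏ l, (1 - v l ^ (Fintype.card F - 1)) = if v = 0 then 1 else 0 := by
  simp [FiniteField.one_sub_pow_card_sub_one, Finset.prod_ite_zero, funext_iff]

theorem FiniteField.prod_eval_one_sub_X_add_X_add_X_pow_card_sub_one {F ι : Type*} [Field F]
    [Fintype F] [DecidableEq F] [Fintype ι] (x y z : ι → F) :
    ∏ l, eval ![x l, y l, z l] (1 - (X 0 + X 1 + X 2) ^ (Fintype.card F - 1)) =
      if x + y + z = 0 then 1 else 0 := by
  simpa using prod_one_sub_pow_card_sub_one (x + y + z)

noncomputable def lowDegreeExponents (n d : ℕ) (D : ℝ) : Finset (Fin n → ℕ) :=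
  {a ∈ Fintype.piFinset fun _ => range (d + 1) | ((∑ i, a i : ℕ) : ℝ) ≤ D}

theorem card_lowDegreeExponents (q n : ℕ) (D : ℝ) :
    #(lowDegreeExponents n (q - 1) D) = mCount q n D := by
  rw [mCount, ← Nat.card_eq_finsetCard]
  congr
  ext a
  simp [lowDegreeExponents]

theorem exists_mem_lowDegreeExponents {n d : ℕ} (A : Fin n → Fin 3 → ℕ)
    (hA : ∀ l, A l 0 + A l 1 + A l 2 ≤ d) :
    ∃ r, (fun l => A l r) ∈ lowDegreeExponents n d (d * n / 3) := by
  have hsum : ∑ l, A l 0 + ∑ l, A l 1 + ∑ l, A l 2 ≤ d * n := by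
    simpa [← sum_add_distrib, mul_comm] using sum_le_sum fun l (_ : l ∈ univ) => hA l
  have hle : ∀ r, ∀ l, A l r ≤ d := by
    intro r l
    have := hA l
    fin_cases r <;> simp <;> omega
  by_contra! hnot
  simp only [lowDegreeExponents, mem_filter, Fintype.mem_piFinset, mem_range, not_and,
    not_le] at hnot
  have hgt := fun r => hnot r fun l => Nat.lt_succ_of_le (hle r l)
  have hsumR : ((∑ l, A l 0 : ℕ) : ℝ) + (∑ l, A l 1 : ℕ) + (∑ l, A l 2 : ℕ) ≤ d * n := by
    exact_mod_cast hsum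
  linarith [hgt 0, hgt 1, hgt 2]

theorem Finset.sum_comp_mul_eq_sum_mul_sum_fiber {α β R : Type*} [CommSemiring R] [DecidableEq β]
    {S : Finset α} {T : Finset β} {π : α → β} (hπ : ∀ A ∈ S, π A ∈ T) (u : β → R) (v : α → R) :
    ∑ A ∈ S, u (π A) * v A = ∑ b ∈ T, u b * ∑ A ∈ S with π A = b, v A := by
  rw [← sum_fiberwise_of_maps_to hπ]
  refine sum_congr rfl fun b _ => ?_
  rw [mul_sum]
  exact sum_congr rfl fun A hA => by rw [(mem_filter.1 hA).2]

section Decomposition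

variable {R : Type*} [CommRing R] {n : ℕ}

theorem MvPolynomial.prod_eval_eq_sum_piFinset (p : MvPolynomial (Fin 3) R) (x y z : Fin n → R) :
    ∏ l, eval ![x l, y l, z l] p = ∑ A ∈ Fintype.piFinset fun _ => p.support,
      (∏ l, coeff (A l) p) * ((∏ l, x l ^ A l 0) * (∏ l, y l ^ A l 1) * (∏ l, z l ^ A l 2)) := by
  simp only [eval_eq', Fin.prod_univ_three, prod_univ_sum, ← prod_mul_distrib]
  rfl

theorem MvPolynomial.exists_prod_eval_eq_sum_three_slices (p : MvPolynomial (Fin 3) R) {d : ℕ}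
    (hp : p.totalDegree ≤ d) :
    ∃ FA GB HC : (Fin n → ℕ) → (Fin n → R) → (Fin n → R) → R, ∀ x y z : Fin n → R,
      ∏ l, eval ![x l, y l, z l] p =
        ∑ a ∈ lowDegreeExponents n d (d * n / 3), (∏ l, x l ^ a l) * FA a y z +
        ∑ b ∈ lowDegreeExponents n d (d * n / 3), (∏ l, y l ^ b l) * GB b x z +
        ∑ c ∈ lowDegreeExponents n d (d * n / 3), (∏ l, z l ^ c l) * HC c x y := by
  classical
  set M := lowDegreeExponents n d (d * n / 3)
  set S := Fintype.piFinset fun _ : Fin n => p.support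
  let e (r : Fin 3) (A : Fin n → Fin 3 →₀ ℕ) : Fin n → ℕ := fun l => A l r
  have hS : ∀ A ∈ S, ∃ r, e r A ∈ M := fun A hA =>
    exists_mem_lowDegreeExponents (fun l => A l) fun l => by
    have := le_totalDegree (Fintype.mem_piFinset.1 hA l)
    rw [Finsupp.sum_fintype _ _ fun _ => rfl, Fin.sum_univ_three] at this
    omega
  set S₁ := {A ∈ S | e 0 A ∈ M}
  set S₂ := {A ∈ S | e 0 A ∉ M ∧ e 1 A ∈ M}
  set S₃ := {A ∈ S | e 0 A ∉ M ∧ e 1 A ∉ M}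
  refine ⟨fun a y z => ∑ A ∈ S₁ with e 0 A = a,
      (∏ l, coeff (A l) p) * (∏ l, y l ^ A l 1) * (∏ l, z l ^ A l 2),
    fun b x z => ∑ A ∈ S₂ with e 1 A = b,
      (∏ l, coeff (A l) p) * (∏ l, x l ^ A l 0) * (∏ l, z l ^ A l 2),
    fun c x y => ∑ A ∈ S₃ with e 2 A = c,
      (∏ l, coeff (A l) p) * (∏ l, x l ^ A l 0) * (∏ l, y l ^ A l 1), fun x y z => ?_⟩
  have h₃ : ∀ A ∈ S₃, e 2 A ∈ M := fun A hA => by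
    obtain ⟨hAS, h0, h1⟩ := mem_filter.1 hA
    obtain ⟨r, hr⟩ := hS A hAS
    fin_cases r <;> simp_all
  rw [prod_eval_eq_sum_piFinset, ← sum_filter_add_sum_filter_not S (e 0 · ∈ M),
    ← sum_filter_add_sum_filter_not (S.filter (e 0 · ∉ M)) (e 1 · ∈ M), filter_filter,
    filter_filter, ← add_assoc]
  congr 1; congr 1
  · refine (sum_congr rfl fun A _ => ?_).trans
      (sum_comp_mul_eq_sum_mul_sum_fiber (fun A hA => (mem_filter.1 hA).2) _ _)
    ring
  · refine (sum_congr rfl fun A _ => ?_).trans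
      (sum_comp_mul_eq_sum_mul_sum_fiber (fun A hA => (mem_filter.1 hA).2.2) _ _)
    ring
  · refine (sum_congr rfl fun A _ => ?_).trans (sum_comp_mul_eq_sum_mul_sum_fiber h₃ _ _)
    ring

theorem MvPolynomial.totalDegree_one_sub_X_add_X_add_X_pow_le (d : ℕ) :
    (1 - (X 0 + X 1 + X 2) ^ d : MvPolynomial (Fin 3) R).totalDegree ≤ d := by
  have hX : ∀ i, (X i : MvPolynomial (Fin 3) R).totalDegree ≤ 1 := fun i =>
    (totalDegree_monomial_le _ _).trans (by simp)
  have hsum : (X 0 + X 1 + X 2 : MvPolynomial (Fin 3) R).totalDegree ≤ 1 :=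
    (totalDegree_add _ _).trans (max_le ((totalDegree_add _ _).trans (max_le (hX 0) (hX 1))) (hX 2))
  refine (totalDegree_sub _ _).trans (max_le (by simp) ((totalDegree_pow _ _).trans ?_))
  simpa using Nat.mul_le_mul_left d hsum

end Decomposition

theorem multicolored_sum_free_bound_general (q n : ℕ)
    (F : Type*) [Field F] [Fintype F] (hF : Fintype.card F = q)
    (N : ℕ) (s t : Fin N → (Fin n → F))
    (h : ∀ i j k, s j + t k = s i + t i → j = i ∧ k = i) :
    N ≤ Mbound q n := by
  classical
  subst hF
  set d := Fintype.card F - 1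
  obtain ⟨FA, GB, HC, hdec⟩ :=
    (1 - (X 0 + X 1 + X 2) ^ d : MvPolynomial (Fin 3) F).exists_prod_eval_eq_sum_three_slices
      (n := n) (totalDegree_one_sub_X_add_X_add_X_pow_le d)
  let u k := -(s k + t k)
  have hzero : ∀ i j k, s i + t j + u k = 0 ↔ i = k ∧ j = k := fun i j k =>
    ⟨fun hijk => h k i j (add_neg_eq_zero.1 hijk), by rintro ⟨rfl, rfl⟩; exact add_neg_cancel _⟩
  set M := lowDegreeExponents n d (d * n / 3)
  have hN := card_le_of_eq_sum_slices (α := M) (β := M) (γ := M)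
    (fun a i => ∏ l, s i l ^ a.1 l) (fun a j k => FA a (t j) (u k))
    (fun b j => ∏ l, t j l ^ b.1 l) (fun b i k => GB b (s i) (u k))
    (fun c k => ∏ l, u k l ^ c.1 l) (fun c i j => HC c (s i) (t j))
    fun i j k => by
      rw [← if_congr (hzero i j k) rfl rfl,
        ← FiniteField.prod_eval_one_sub_X_add_X_add_X_pow_card_sub_one, hdec,
        ← sum_coe_sort M, ← sum_coe_sort M, ← sum_coe_sort M]
  rw [Fintype.card_fin, Fintype.card_coe] at hN
  rw [Mbound, ← card_lowDegreeExponents, ← Nat.cast_pred Fintype.card_pos]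
  change N ≤ 3 * #M
  omega

theorem multicolored_sum_free_bound (q n : ℕ) (hq : IsPrimePow q) (hn : 0 < n)
    (F : Type*) [Field F] [Fintype F] (hF : Fintype.card F = q)
    (N : ℕ) (s t : Fin N → (Fin n → F))
    (hs : Function.Injective s) (ht : Function.Injective t)
    (h : ∀ i j k, s j + t k = s i + t i → j = i ∧ k = i) :
    N ≤ Mbound q n :=
  multicolored_sum_free_bound_general q n F hF N s t h
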